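/- Let I be a monomial ideal of E with linear quotients whose decomposition function g is regular (i.e., set(g(e_s·u)) ⊆ set(u) for all u ∈ G(I) and all s ∈ set(u) \ supp(u)). Then g(e_s·g(e_t·u)) = g(e_t·g(e_s·u)) for all u ∈ M(I) and all s, t ∈ set(u) with s, t ∉ supp(u). -/

import Mathlib

open ExteriorAlgebra

/-- The `i`-th basis monomial `e_i` of the exterior algebra `E = K⟨e_1,…,e_n⟩`. -/
noncomputable def e (K : Type) [Field K] {n : ℕ} (i : Fin n) :
    ExteriorAlgebra K (Fin n → K) :=
  ι K (Pi.single i 1)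

/-- The monomial `e_μ = e_{i_1} ∧ ⋯ ∧ e_{i_d}` for `μ = {i_1 < ⋯ < i_d}`. -/
noncomputable def eMon (K : Type) [Field K] {n : ℕ} (μ : Finset (Fin n)) :
    ExteriorAlgebra K (Fin n → K) :=
  ((μ.sort (· ≤ ·)).map (e K)).prod

/-- The ideal `(u_1, …, u_j)` generated by the monomials `u_i = e_{μ_i}`, `i ≤ j`. -/
noncomputable def Iupto (K : Type) [Field K] {n r : ℕ}
    (μs : Fin r → Finset (Fin n)) (j : Fin r) :
    Ideal (ExteriorAlgebra K (Fin n → K)) :=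
  Ideal.span {v | ∃ i, i ≤ j ∧ v = eMon K (μs i)}

/-- The ideal `(u_1, …, u_{j-1})` generated by the monomials `u_i = e_{μ_i}`, `i < j`. -/
noncomputable def Ibelow (K : Type) [Field K] {n r : ℕ}
    (μs : Fin r → Finset (Fin n)) (j : Fin r) :
    Ideal (ExteriorAlgebra K (Fin n → K)) :=
  Ideal.span {v | ∃ i, i < j ∧ v = eMon K (μs i)}

/-- `set(u_j) = {k : e_k ∈ (u_1,…,u_{j-1}) : (u_j)}`. -/
noncomputable def setIdx (K : Type) [Field K] {n r : ℕ}
    (μs : Fin r → Finset (Fin n)) (j : Fin r) : Set (Fin n) :=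
  {k | e K k * eMon K (μs j) ∈ Ibelow K μs j}

/-- The monomial ideal generated by `u_1, …, u_r` has linear quotients with
respect to this order: each colon ideal `(u_1,…,u_{j-1}) : (u_j)` is generated
by a subset of the variables `e_1, …, e_n`. -/
def LinearQuotients (K : Type) [Field K] {n r : ℕ}
    (μs : Fin r → Finset (Fin n)) : Prop :=
  ∀ j : Fin r, ∃ S : Finset (Fin n),
    {f : ExteriorAlgebra K (Fin n → K) | f * eMon K (μs j) ∈ Ibelow K μs j}
      = (Ideal.span {v | ∃ k ∈ S, v = e K k} : Set (ExteriorAlgebra K (Fin n → K)))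

/-- `g(e_ν) = u_j`: `j` is the least index with `e_ν ∈ (u_1, …, u_j)`. -/
noncomputable def IsDecomp (K : Type) [Field K] {n r : ℕ}
    (μs : Fin r → Finset (Fin n)) (ν : Finset (Fin n)) (j : Fin r) : Prop :=
  eMon K ν ∈ Iupto K μs j ∧ ∀ i, i < j → eMon K ν ∉ Iupto K μs i


/-! With linear quotients, `g(e_ρ) = u_j` exactly when `supp(u_j) ⊆ ρ` and no index of
`ρ \ supp(u_j)` lies in `set(u_j)`: a monomial lies in a monomial ideal iff some generator
divides it, which one sees by applying the algebra endomorphism killing the variables outside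
`ρ`. Regularity then shows `g(e_a · g(w)) = g(e_a · w)` for every monomial `w` and
`a ∉ supp(g(w))`, so both sides of the claim equal `g(e_s e_t u) = g(e_t e_s u)`. -/

section Monomials

variable {K : Type} [Field K] {n : ℕ}

open Set.powersetCard in
theorem eMon_eq_basis (μ : Finset (Fin n)) :
    eMon K μ = (Pi.basisFun K (Fin n)).ExteriorAlgebra μ := by
  rw [basis_apply_ofCard _ rfl, ιMulti_family, ιMulti_apply, List.ofFn_eq_map, eMon,
    ← Finset.listMap_orderEmbOfFin_finRange μ rfl, List.map_map]
  congr 2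
  funext i
  simp [e, ofFinEmbEquiv_symm_apply]

theorem eMon_ne_zero (μ : Finset (Fin n)) : eMon K μ ≠ 0 := by
  rw [eMon_eq_basis]
  exact Module.Basis.ne_zero _ μ

theorem eMon_singleton (k : Fin n) : eMon K {k} = e K k := by
  simp [eMon, Finset.sort_singleton]

open Set.powersetCard in
theorem eMon_mul_eMon_of_disjoint {σ τ : Finset (Fin n)} (h : Disjoint σ τ) :
    ∃ ε : ℤˣ, eMon K σ * eMon K τ = ε • eMon K (σ ∪ τ) := by
  have := basis_mul_of_disjoint (Pi.basisFun K (Fin n)) (ofCard rfl) (ofCard rfl) h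
  exact ⟨_, by
    rw [eMon_eq_basis, eMon_eq_basis, eMon_eq_basis, ← Finset.disjUnion_eq_union _ _ h]
    exact this⟩

theorem eMon_sdiff_mul_eMon_mem_iff {I : Ideal (ExteriorAlgebra K (Fin n → K))}
    {σ ρ : Finset (Fin n)} (h : σ ⊆ ρ) :
    eMon K (ρ \ σ) * eMon K σ ∈ I ↔ eMon K ρ ∈ I := by
  obtain ⟨ε, hε⟩ := eMon_mul_eMon_of_disjoint (K := K) (Finset.sdiff_disjoint (s := σ) (t := ρ))
  rw [hε, Finset.sdiff_union_of_subset h, Submodule.smul_mem_iff']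

noncomputable def restrictVars (K : Type) [Field K] {n : ℕ} (ρ : Finset (Fin n)) :
    ExteriorAlgebra K (Fin n → K) →ₐ[K] ExteriorAlgebra K (Fin n → K) :=
  map (LinearMap.pi fun k => if k ∈ ρ then LinearMap.proj k else 0)

theorem restrictVars_e (ρ : Finset (Fin n)) (k : Fin n) :
    restrictVars K ρ (e K k) = if k ∈ ρ then e K k else 0 := by
  have hsingle : (LinearMap.pi fun j => if j ∈ ρ then LinearMap.proj (R := K) j else 0)
      (Pi.single k 1 : Fin n → K) = if k ∈ ρ then Pi.single k 1 else 0 := by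
    ext j
    rw [LinearMap.pi_apply]
    split_ifs <;> simp [Pi.single_apply] <;> grind
  rw [restrictVars, e, map_apply_ι, hsingle]
  split_ifs
  exacts [rfl, map_zero _]

theorem restrictVars_eMon (ρ σ : Finset (Fin n)) :
    restrictVars K ρ (eMon K σ) = if σ ⊆ ρ then eMon K σ else 0 := by
  rw [eMon, map_list_prod, List.map_map]
  split_ifs with h
  · congr 1
    refine List.map_congr_left fun k hk => ?_
    simp [restrictVars_e, h (Finset.mem_sort _ |>.1 hk)]
  · obtain ⟨k, hkσ, hkρ⟩ := Finset.not_subset.1 h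
    exact List.prod_eq_zero (List.mem_map.2 ⟨k, (Finset.mem_sort _).2 hkσ, by
      simp [restrictVars_e, hkρ]⟩)

theorem eMon_mem_span_eMon_iff {ι : Type*} (f : ι → Finset (Fin n)) (p : ι → Prop)
    (ρ : Finset (Fin n)) :
    eMon K ρ ∈ Ideal.span {v | ∃ i, p i ∧ v = eMon K (f i)} ↔ ∃ i, p i ∧ f i ⊆ ρ := by
  constructor
  · intro hmem
    by_contra! hno
    have hker : ∀ x ∈ Ideal.span {v | ∃ i, p i ∧ v = eMon K (f i)}, restrictVars K ρ x = 0 := by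
      intro x hx
      induction hx using Submodule.span_induction with
      | mem x hx =>
          obtain ⟨i, hpi, rfl⟩ := hx
          simp [restrictVars_eMon, hno i hpi]
      | zero => exact map_zero _
      | add x y _ _ hx hy => rw [map_add, hx, hy, add_zero]
      | smul a x _ hx => rw [smul_eq_mul, map_mul, hx, mul_zero]
    have := hker _ hmem
    rw [restrictVars_eMon, if_pos subset_rfl] at this
    exact eMon_ne_zero ρ this
  · rintro ⟨i, hpi, hsub⟩
    exact (eMon_sdiff_mul_eMon_mem_iff hsub).1
      (Ideal.mul_mem_left _ _ (Ideal.subset_span ⟨i, hpi, rfl⟩))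

end Monomials

section Decomposition

variable {K : Type} [Field K] {n r : ℕ} {μs : Fin r → Finset (Fin n)}

theorem eMon_mem_span_e_iff (S c : Finset (Fin n)) :
    eMon K c ∈ Ideal.span {v | ∃ k ∈ S, v = e K k} ↔ ∃ k ∈ c, k ∈ S := by
  simp_rw [← eMon_singleton (K := K)]
  rw [eMon_mem_span_eMon_iff (fun k => {k}) (· ∈ S) c]
  simp only [Finset.singleton_subset_iff]
  exact ⟨fun ⟨k, hkS, hkc⟩ => ⟨k, hkc, hkS⟩, fun ⟨k, hkc, hkS⟩ => ⟨k, hkS, hkc⟩⟩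

theorem eMon_mem_Iupto_iff (μs : Fin r → Finset (Fin n)) (j : Fin r) (ρ : Finset (Fin n)) :
    eMon K ρ ∈ Iupto K μs j ↔ ∃ i ≤ j, μs i ⊆ ρ :=
  eMon_mem_span_eMon_iff μs (· ≤ j) ρ

theorem eMon_mem_Ibelow_iff (μs : Fin r → Finset (Fin n)) (j : Fin r) (ρ : Finset (Fin n)) :
    eMon K ρ ∈ Ibelow K μs j ↔ ∃ i < j, μs i ⊆ ρ :=
  eMon_mem_span_eMon_iff μs (· < j) ρ

theorem isDecomp_iff_mem_Iupto_and_notMem_Ibelow (ρ : Finset (Fin n)) (j : Fin r) :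
    IsDecomp K μs ρ j ↔ eMon K ρ ∈ Iupto K μs j ∧ eMon K ρ ∉ Ibelow K μs j := by
  simp only [IsDecomp, eMon_mem_Iupto_iff, eMon_mem_Ibelow_iff]
  refine and_congr_right fun _ => ⟨fun h ⟨i, hij, hi⟩ => h i hij ⟨i, le_rfl, hi⟩,
    fun h i hij ⟨k, hki, hk⟩ => h ⟨k, hki.trans_lt hij, hk⟩⟩

theorem IsDecomp.unique {ρ : Finset (Fin n)} {j j' : Fin r}
    (h : IsDecomp K μs ρ j) (h' : IsDecomp K μs ρ j') : j = j' := by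
  rcases lt_trichotomy j j' with hlt | heq | hlt
  · exact absurd h.1 (h'.2 j hlt)
  · exact heq
  · exact absurd h'.1 (h.2 j' hlt)

namespace LinearQuotients

theorem eMon_mul_mem_Ibelow_iff (hlq : LinearQuotients K μs) (j : Fin r) (c : Finset (Fin n)) :
    eMon K c * eMon K (μs j) ∈ Ibelow K μs j ↔ ∃ k ∈ c, k ∈ setIdx K μs j := by
  obtain ⟨S, hS⟩ := hlq j
  have hcolon (f : ExteriorAlgebra K (Fin n → K)) :
      f * eMon K (μs j) ∈ Ibelow K μs j ↔ f ∈ Ideal.span {v | ∃ k ∈ S, v = e K k} :=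
    Set.ext_iff.1 hS f
  have hset (k : Fin n) : k ∈ setIdx K μs j ↔ k ∈ S := by
    rw [setIdx, Set.mem_ofPred_eq, hcolon, ← eMon_singleton, eMon_mem_span_e_iff]
    simp
  simp only [hcolon, eMon_mem_span_e_iff, hset]

theorem eMon_mem_Ibelow_iff (hlq : LinearQuotients K μs) {j : Fin r} {ρ : Finset (Fin n)}
    (hsub : μs j ⊆ ρ) :
    eMon K ρ ∈ Ibelow K μs j ↔ ∃ k ∈ ρ \ μs j, k ∈ setIdx K μs j := by
  rw [← eMon_sdiff_mul_eMon_mem_iff hsub, hlq.eMon_mul_mem_Ibelow_iff]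

theorem isDecomp_iff (hlq : LinearQuotients K μs) (ρ : Finset (Fin n)) (j : Fin r) :
    IsDecomp K μs ρ j ↔ μs j ⊆ ρ ∧ ∀ k ∈ ρ \ μs j, k ∉ setIdx K μs j := by
  rw [isDecomp_iff_mem_Iupto_and_notMem_Ibelow, eMon_mem_Iupto_iff]
  constructor
  · rintro ⟨⟨i, hij, hsub⟩, hnot⟩
    obtain rfl : i = j := hij.eq_or_lt.resolve_right fun hlt =>
      hnot ((_root_.eMon_mem_Ibelow_iff μs j ρ).2 ⟨i, hlt, hsub⟩)
    exact ⟨hsub, fun k hk hkset => hnot ((hlq.eMon_mem_Ibelow_iff hsub).2 ⟨k, hk, hkset⟩)⟩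
  · rintro ⟨hsub, hset⟩
    refine ⟨⟨j, le_rfl, hsub⟩, fun hmem => ?_⟩
    obtain ⟨k, hk, hkset⟩ := (hlq.eMon_mem_Ibelow_iff hsub).1 hmem
    exact hset k hk hkset

end LinearQuotients

def IsRegularDecomp (K : Type) [Field K] {n r : ℕ} (μs : Fin r → Finset (Fin n)) : Prop :=
  ∀ l : Fin r, ∀ s : Fin n, s ∈ setIdx K μs l → s ∉ μs l →
    ∀ l' : Fin r, IsDecomp K μs (insert s (μs l)) l' → setIdx K μs l' ⊆ setIdx K μs l

/-- Regularity extends to every `a ∉ supp(u_j)`, since `g(e_a u_j) = u_j` when `a ∉ set(u_j)`. -/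
theorem IsRegularDecomp.setIdx_subset (hreg : IsRegularDecomp K μs) (hlq : LinearQuotients K μs)
    {a : Fin n} {j j' : Fin r} (ha : a ∉ μs j) (hj' : IsDecomp K μs (insert a (μs j)) j') :
    setIdx K μs j' ⊆ setIdx K μs j := by
  by_cases haset : a ∈ setIdx K μs j
  · exact hreg j a haset ha j' hj'
  · have hj : IsDecomp K μs (insert a (μs j)) j := by
      refine (hlq.isDecomp_iff _ _).2 ⟨Finset.subset_insert a _, fun k hk => ?_⟩
      rw [Finset.insert_sdiff_of_notMem _ ha, Finset.sdiff_self, insert_empty_eq,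
        Finset.mem_singleton] at hk
      exact hk ▸ haset
    rw [hj'.unique hj]

theorem IsRegularDecomp.isDecomp_insert (hreg : IsRegularDecomp K μs)
    (hlq : LinearQuotients K μs) {a : Fin n} {ρ : Finset (Fin n)} {j j' : Fin r}
    (hj : IsDecomp K μs ρ j) (ha : a ∉ μs j) (hj' : IsDecomp K μs (insert a (μs j)) j') :
    IsDecomp K μs (insert a ρ) j' := by
  obtain ⟨hjsub, hjset⟩ := (hlq.isDecomp_iff _ _).1 hj
  obtain ⟨hj'sub, hj'set⟩ := (hlq.isDecomp_iff _ _).1 hj'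
  refine (hlq.isDecomp_iff _ _).2 ⟨hj'sub.trans (Finset.insert_subset_insert a hjsub), ?_⟩
  intro k hk
  by_cases hka : k ∈ insert a (μs j)
  · exact hj'set k (Finset.mem_sdiff.2 ⟨hka, (Finset.mem_sdiff.1 hk).2⟩)
  · have hkρ : k ∈ ρ \ μs j := by
      simp only [Finset.mem_insert, not_or, Finset.mem_sdiff] at hk hka ⊢
      exact ⟨hk.1.resolve_left hka.1, hka.2⟩
    exact fun hkset => hjset k hkρ (hreg.setIdx_subset hlq ha hj' hkset)

end Decomposition

theorem stmt18_general {K : Type} [Field K] {n r : ℕ} (μs : Fin r → Finset (Fin n))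
    (hlq : LinearQuotients K μs)
    -- regularity of the decomposition function
    (hreg : ∀ l : Fin r, ∀ s : Fin n, s ∈ setIdx K μs l → s ∉ μs l →
      ∀ l' : Fin r, IsDecomp K μs (insert s (μs l)) l' →
        setIdx K μs l' ⊆ setIdx K μs l)
    (ν : Finset (Fin n))
    (s t : Fin n)
    (jt js : Fin r)
    (hjt : IsDecomp K μs (insert t ν) jt) (hjs : IsDecomp K μs (insert s ν) js)
    (hst : s ∉ μs jt) (hts : t ∉ μs js)
    (jst jts : Fin r)
    (hjst : IsDecomp K μs (insert s (μs jt)) jst)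
    (hjts : IsDecomp K μs (insert t (μs js)) jts) :
    μs jst = μs jts := by
  have h₁ := IsRegularDecomp.isDecomp_insert hreg hlq hjt hst hjst
  have h₂ := IsRegularDecomp.isDecomp_insert hreg hlq hjs hts hjts
  rw [Finset.insert_comm] at h₁
  rw [h₁.unique h₂]

/-- Let `I` have linear quotients with decomposition function `g`. Suppose `g`
is regular: `set(g(e_s·u)) ⊆ set(u)` for all `u ∈ G(I)` and all
`s ∈ set(u) \ supp(u)`. Then `g(e_s·g(e_t·u)) = g(e_t·g(e_s·u))` for every
monomial `u = e_ν ∈ M(I)` (with `g(u) = u_{ju}`) and all `s, t ∈ set(u)` with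
`s, t ∉ supp(u)`. The values of `g` are encoded by `IsDecomp` (least index). -/
theorem stmt18 {K : Type} [Field K] {n r : ℕ} (μs : Fin r → Finset (Fin n))
    (hlq : LinearQuotients K μs)
    -- regularity of the decomposition function
    (hreg : ∀ l : Fin r, ∀ s : Fin n, s ∈ setIdx K μs l → s ∉ μs l →
      ∀ l' : Fin r, IsDecomp K μs (insert s (μs l)) l' →
        setIdx K μs l' ⊆ setIdx K μs l)
    (ν : Finset (Fin n)) (ju : Fin r) (hju : IsDecomp K μs ν ju)
    (s t : Fin n)
    (hs : s ∈ setIdx K μs ju) (ht : t ∈ setIdx K μs ju)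
    (hsν : s ∉ ν) (htν : t ∉ ν)
    (jt js : Fin r)
    (hjt : IsDecomp K μs (insert t ν) jt) (hjs : IsDecomp K μs (insert s ν) js)
    (hst : s ∉ μs jt) (hts : t ∉ μs js)
    (jst jts : Fin r)
    (hjst : IsDecomp K μs (insert s (μs jt)) jst)
    (hjts : IsDecomp K μs (insert t (μs js)) jts) :
    μs jst = μs jts :=
  stmt18_general μs hlq hreg ν s t jt js hjt hjs hst hts jst jts hjst hjts
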